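/- arXiv:1302.3792 — 2 statements merged into one kernel-verified Lean document; each statement's English description precedes it below -/
import Mathlib

section
/- Let n ≥ 1 and let M be the n×n matrix with M_{11} = -1, M_{ii} = -2 for 2 ≤ i ≤ n-1, M_{nn} = -3, M_{i,i+1} = M_{i+1,i} = -1, and zeros elsewhere. Then the first row of M⁻¹ is (-(2n-1)/2, (2n-3)/2, -(2n-5)/2, ..., (-1)^n/2) and the last row is ((-1)^n/2, (-1)^{n-1}/2, ..., 1/2, -1/2). -/
/-!
The inverse is explicit: `M⁻¹ i j = (-1)^(i+j+1) (2n - 2 max(i,j) - 1) / 2` (indices from 0).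
Since `M` is tridiagonal, each entry of `M * M⁻¹` is a sum of at most three terms, and checking
that it is a Kronecker delta amounts to a three-term recurrence in the row index of the explicit
inverse, with one boundary version at each end.
-/

open Finset Matrix

lemma sum_range_eq_sum_Ico_of_support {M : Type*} [AddCommMonoid M] {f : ℕ → M} {a b n : ℕ}
    (hbn : b ≤ n) (hf : ∀ k < n, k < a ∨ b ≤ k → f k = 0) :
    ∑ k ∈ range n, f k = ∑ k ∈ Ico a b, f k := by
  refine (sum_subset (fun k hk => ?_) fun k hkn hk => hf k ?_ ?_).symm
  · simp only [mem_Ico, mem_range] at hk ⊢; omega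
  · simpa using hkn
  · simpa only [mem_Ico, not_and_or, not_le, not_lt] using hk

def chainInvEntry (n a b : ℕ) : ℚ := (-1) ^ (a + b + 1) * (2 * n - 2 * (max a b : ℕ) - 1) / 2

lemma chainInvEntry_boundary_zero (n l : ℕ) :
    -chainInvEntry n 0 l - chainInvEntry n 1 l = if 0 = l then 1 else 0 := by
  unfold chainInvEntry
  rcases Nat.eq_zero_or_pos l with rfl | hl
  · norm_num; ring
  · rw [if_neg hl.ne, Nat.zero_max, max_eq_right hl]
    ring

lemma chainInvEntry_recurrence (n k l : ℕ) :
    -chainInvEntry n k l - 2 * chainInvEntry n (k + 1) l - chainInvEntry n (k + 2) l =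
      if k + 1 = l then 1 else 0 := by
  unfold chainInvEntry
  rcases lt_trichotomy l (k + 1) with hl | rfl | hl
  · rw [if_neg hl.ne', max_eq_left (by omega), max_eq_left (by omega), max_eq_left (by omega)]
    push_cast; ring
  · rw [if_pos rfl, max_eq_right (by omega), max_eq_left le_rfl, max_eq_left (by omega)]
    push_cast
    ring_nf
    simp only [pow_mul', neg_one_sq, one_pow]
  · rw [if_neg hl.ne, max_eq_right (by omega), max_eq_right (by omega), max_eq_right (by omega)]
    ring

lemma chainInvEntry_boundary_last (p l : ℕ) (hl : l ≤ p + 1) :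
    -chainInvEntry (p + 2) p l - 3 * chainInvEntry (p + 2) (p + 1) l =
      if p + 1 = l then 1 else 0 := by
  unfold chainInvEntry
  rcases hl.lt_or_eq with hl | rfl
  · rw [if_neg hl.ne', max_eq_left (by omega), max_eq_left (by omega)]
    push_cast; ring
  · rw [if_pos rfl, max_eq_right (by omega), max_eq_left le_rfl]
    push_cast
    ring_nf
    simp only [pow_mul', neg_one_sq, one_pow]

def chainEntry (n i k : ℕ) : ℚ :=
  if i = k then (if i = 0 then -1 else if i + 1 = n then -3 else -2)
  else if i + 1 = k ∨ k + 1 = i then -1 else 0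

lemma chainEntry_eq_zero {n i k : ℕ} (h : k + 1 < i ∨ i + 1 < k) : chainEntry n i k = 0 := by
  unfold chainEntry
  rw [if_neg (by omega), if_neg (by omega)]

lemma sum_chainEntry_mul_chainInvEntry (p i l : ℕ) (hi : i < p + 2) (hl : l < p + 2) :
    ∑ k ∈ range (p + 2), chainEntry (p + 2) i k * chainInvEntry (p + 2) k l =
      if i = l then 1 else 0 := by
  obtain rfl | ⟨q, rfl, hq⟩ | rfl : i = 0 ∨ (∃ q, i = q + 1 ∧ q < p) ∨ i = p + 1 := by
    rcases i with _ | q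
    · exact .inl rfl
    · rcases Nat.lt_or_ge q p with hq | hq
      · exact .inr (.inl ⟨q, rfl, hq⟩)
      · exact .inr (.inr (by omega))
  · rw [sum_range_eq_sum_Ico_of_support (a := 0) (b := 2) (by omega)
      (fun k hkn hk => by rw [chainEntry_eq_zero (by omega), zero_mul])]
    simpa [sum_range_succ, chainEntry, sub_eq_add_neg] using chainInvEntry_boundary_zero (p + 2) l
  · rw [sum_range_eq_sum_Ico_of_support (a := q) (b := q + 3) (by omega)
      (fun k hkn hk => by rw [chainEntry_eq_zero (by omega), zero_mul])]
    simpa [sum_Ico_eq_sum_range, sum_range_succ, chainEntry, hq.ne, sub_eq_add_neg, add_assoc]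
      using chainInvEntry_recurrence (p + 2) q l
  · rw [sum_range_eq_sum_Ico_of_support (a := p) (b := p + 2) le_rfl
      (fun k hkn hk => by rw [chainEntry_eq_zero (by omega), zero_mul])]
    simpa [sum_Ico_eq_sum_range, sum_range_succ, chainEntry, sub_eq_add_neg]
      using chainInvEntry_boundary_last p l (by omega)

def chainMatrix (n : ℕ) : Matrix (Fin n) (Fin n) ℚ := of fun i k => chainEntry n i k

def chainInv (n : ℕ) : Matrix (Fin n) (Fin n) ℚ := of fun k l => chainInvEntry n k l

lemma chainMatrix_mul_chainInv (p : ℕ) : chainMatrix (p + 2) * chainInv (p + 2) = 1 := by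
  ext i l
  rw [mul_apply, one_apply]
  simp only [chainMatrix, chainInv, of_apply, Fin.ext_iff]
  rw [Fin.sum_univ_eq_sum_range (fun k => chainEntry (p + 2) i k * chainInvEntry (p + 2) k l)]
  exact sum_chainEntry_mul_chainInvEntry p i l i.isLt l.isLt

lemma inv_chainMatrix (p : ℕ) : (chainMatrix (p + 2))⁻¹ = chainInv (p + 2) :=
  inv_eq_right_inv (chainMatrix_mul_chainInv p)

lemma chainInvEntry_zero_left (n j : ℕ) :
    chainInvEntry n 0 j = (-1) ^ (j + 1) * (2 * n - 2 * j - 1) / 2 := by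
  simp [chainInvEntry]

lemma chainInvEntry_last_left (p j : ℕ) (hj : j ≤ p + 1) :
    chainInvEntry (p + 2) (p + 1) j = (-1) ^ (p + 2 - j) / 2 := by
  rw [chainInvEntry, max_eq_left hj, show p + 1 + j + 1 = (p + 2 - j) + 2 * j by omega,
    pow_add, pow_mul]
  push_cast
  ring

/-- For the n×n chain matrix with diagonal (-1, -2, ..., -2, -3) and
off-diagonal neighbouring entries -1, the first row of M⁻¹ is
(-(2n-1)/2, (2n-3)/2, ..., (-1)^n/2) and the last row is
((-1)^n/2, (-1)^{n-1}/2, ..., 1/2, -1/2). -/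
theorem stmt6 (n : ℕ) (hn : 1 ≤ n) (M : Matrix (Fin n) (Fin n) ℚ)
    (hfirst : M ⟨0, by omega⟩ ⟨0, by omega⟩ = -1)
    (hdiag : ∀ i : Fin n, 1 ≤ (i : ℕ) → (i : ℕ) ≤ n - 2 → M i i = -2)
    (hlast : M ⟨n - 1, by omega⟩ ⟨n - 1, by omega⟩ = -3)
    (hoff : ∀ i j : Fin n, (i : ℕ) + 1 = (j : ℕ) → M i j = -1 ∧ M j i = -1)
    (hzero : ∀ i j : Fin n, (i : ℕ) ≠ (j : ℕ) → (i : ℕ) + 1 ≠ (j : ℕ) →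
      (j : ℕ) + 1 ≠ (i : ℕ) → M i j = 0) :
    ∀ j : Fin n,
      M⁻¹ ⟨0, by omega⟩ j = (-1) ^ ((j : ℕ) + 1) * (2 * (n : ℚ) - 2 * (j : ℕ) - 1) / 2 ∧
      M⁻¹ ⟨n - 1, by omega⟩ j = (-1) ^ (n - (j : ℕ)) / 2 := by
  obtain ⟨p, rfl⟩ : ∃ p, n = p + 2 := by
    refine ⟨n - 2, ?_⟩
    by_contra h
    obtain rfl : n = 1 := by omega
    exact absurd (hfirst.symm.trans hlast) (by norm_num)
  have hM : M = chainMatrix (p + 2) := by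
    ext i j
    simp only [chainMatrix, of_apply, chainEntry]
    split_ifs with hij h0 hend hadj
    · obtain rfl := Fin.ext hij
      rwa [show i = ⟨0, by omega⟩ from Fin.ext h0]
    · obtain rfl := Fin.ext hij
      rwa [show i = ⟨p + 2 - 1, by omega⟩ from Fin.ext (show (i : ℕ) = p + 2 - 1 by omega)]
    · obtain rfl := Fin.ext hij
      exact hdiag i (by omega) (by omega)
    · rcases hadj with h | h
      · exact (hoff i j h).1
      · exact (hoff j i h).2
    · exact hzero i j hij (fun h => hadj (.inl h)) (fun h => hadj (.inr h))
  rw [hM, inv_chainMatrix]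
  intro j
  exact ⟨chainInvEntry_zero_left _ _, chainInvEntry_last_left p j (by omega)⟩
end

section
/- For every integer n ≥ 2, the negative continued fraction [-2, -4, -2, ..., -2] (with n-1 trailing entries equal to -2, i.e. k = n) equals -1 - (2n+1)/(3n+1), and the Giroux–Honda product equals 6. -/
/-- Evaluation of a negative continued fraction [r₀, r₁, ..., r_k] =
r₀ - 1/(r₁ - 1/(r₂ - ... - 1/r_k)). -/
def ncf : List ℚ → ℚ
  | [] => 0
  | [r] => r
  | r :: s :: rest => r - 1 / ncf (s :: rest)

/-- The Giroux–Honda count |(r₀+1)(r₁+1)···(r_{k-1}+1)·r_k|. -/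
def ghCount (l : List ℚ) : ℚ :=
  |((l.dropLast.map (fun r => r + 1)).prod) * l.getLastD 0|

open List

/- For `l = []` this holds because `ncf [] = 0` and `1 / 0 = 0` in `ℚ`; likewise the formula
below reads `0 = -1 / 0` at `k = 0`. -/
theorem ncf_cons (r : ℚ) (l : List ℚ) : ncf (r :: l) = r - 1 / ncf l := by
  cases l <;> simp [ncf]

theorem ncf_replicate_neg_two (k : ℕ) : ncf (replicate k (-2)) = -(k + 1) / k := by
  induction k with
  | zero => simp [ncf]
  | succ k ih =>
    rw [replicate_succ, ncf_cons, ih, one_div_div]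
    have : (k : ℚ) + 1 ≠ 0 := by positivity
    push_cast
    field_simp
    ring

theorem ncf_neg_two_neg_four_replicate (k : ℕ) :
    ncf ((-2) :: (-4) :: replicate k (-2)) = -(5 * k + 7) / (3 * k + 4) := by
  have hk : (k : ℚ) + 1 ≠ 0 := by positivity
  have hk' : 3 * (k : ℚ) + 4 ≠ 0 := by positivity
  have inner : ncf ((-4) :: replicate k (-2)) = -(3 * k + 4) / (k + 1) := by
    rw [ncf_cons, ncf_replicate_neg_two, one_div_div]
    field_simp
    ring
  rw [ncf_cons, inner, one_div_div]
  field_simp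
  ring

theorem ghCount_concat (l : List ℚ) (r : ℚ) :
    ghCount (l ++ [r]) = |(l.map (· + 1)).prod * r| := by
  simp [ghCount]

theorem ghCount_neg_two_neg_four_replicate (k : ℕ) :
    ghCount ((-2) :: (-4) :: replicate (k + 1) (-2)) = 6 := by
  rw [replicate_succ', ← cons_append, ← cons_append, ghCount_concat]
  norm_num [prod_replicate]

/-- For n ≥ 2, the negative continued fraction [-2, -4, -2, ..., -2]
(with n-1 trailing entries -2) equals -1 - (2n+1)/(3n+1), and the
Giroux–Honda product equals 6. -/
theorem stmt16 (n : ℕ) (hn : 2 ≤ n) :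
    ncf ((-2) :: (-4) :: List.replicate (n - 1) (-2)) =
      -1 - (2 * (n : ℚ) + 1) / (3 * (n : ℚ) + 1) ∧
    ghCount ((-2) :: (-4) :: List.replicate (n - 1) (-2)) = 6 := by
  obtain ⟨k, rfl⟩ : ∃ k, n = k + 2 := ⟨n - 2, by omega⟩
  refine ⟨?_, ghCount_neg_two_neg_four_replicate k⟩
  rw [show k + 2 - 1 = k + 1 from rfl, ncf_neg_two_neg_four_replicate]
  have : 3 * ((k : ℚ) + 2) + 1 ≠ 0 := by positivity
  push_cast
  field_simp
  ring
end
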